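/- arXiv:1309.7917 — 3 statements merged into one kernel-verified Lean document; each statement's English description precedes it below -/
import Mathlib

section
/- If two distinct cycles in a directed graph share a common vertex, then the graph has uncountably many tail-equivalence classes of infinite paths. -/
/-- A directed graph: vertices, edges, source and range maps. -/
structure DirGraph where
  V : Type
  E : Type
  s : E → V
  r : E → V

/-- An infinite path in a directed graph. -/
def InfPath (G : DirGraph) : Type :=
  {p : ℕ → G.E // ∀ n, G.r (p n) = G.s (p (n + 1))}

/-- Tail equivalence of infinite paths. -/
def TailEq (G : DirGraph) (p q : InfPath G) : Prop :=
  ∃ m n : ℕ, ∀ k : ℕ, p.1 (n + k) = q.1 (m + k)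

/-- A cycle based at the vertex `v`: a nonempty finite path from `v` to `v`
whose source vertices are pairwise distinct. -/
structure CycleAt (G : DirGraph) (v : G.V) where
  edges : List G.E
  ne : edges ≠ []
  chain : edges.Chain' (fun e f => G.r e = G.s f)
  src : G.s (edges.head ne) = v
  rng : G.r (edges.getLast ne) = v
  nodup : (edges.map G.s).Nodup

/-!
Concatenating copies of `c` and `d` along a binary sequence `σ` gives an infinite path `p σ`.
An edge of a cycle at `v` starts at `v` only if it is the first edge, so the visits of `p σ`
to `v` mark the block boundaries and `σ` can be read back from `p σ`. A path tail-equivalent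
to a fixed `q` is determined by the two shifts and its finitely many edges before the shift,
and the first `n` edges of `p σ` depend only on the first `n` bits of `σ`. Hence every
tail-equivalence class contains only countably many of the paths `p σ`, while there are
uncountably many `σ`.
-/

section ConcatBlocks

variable {α : Type*}

/-- The infinite concatenation `w 0 ++ w 1 ++ w 2 ++ ⋯`. -/
def concatBlocks (w : ℕ → List α) (hw : ∀ i, w i ≠ []) (n : ℕ) : α :=
  if h : n < (w 0).length then (w 0)[n]
  else concatBlocks (fun i => w (i + 1)) (fun i => hw (i + 1)) (n - (w 0).length)
termination_by n
decreasing_by have := List.length_pos_iff.2 (hw 0); omega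

variable {w w' : ℕ → List α} {hw : ∀ i, w i ≠ []} {hw' : ∀ i, w' i ≠ []}

theorem concatBlocks_of_lt {n : ℕ} (hn : n < (w 0).length) :
    concatBlocks w hw n = (w 0)[n] := by
  rw [concatBlocks, dif_pos hn]

theorem concatBlocks_length_add (k : ℕ) :
    concatBlocks w hw ((w 0).length + k) =
      concatBlocks (fun i => w (i + 1)) (fun i => hw (i + 1)) k := by
  rw [concatBlocks, dif_neg (by omega), Nat.add_sub_cancel_left]

theorem concatBlocks_rel_succ {R : α → α → Prop} (hchain : ∀ i, (w i).IsChain R)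
    (hlink : ∀ i, R ((w i).getLast (hw i)) ((w (i + 1)).head (hw (i + 1)))) (n : ℕ) :
    R (concatBlocks w hw n) (concatBlocks w hw (n + 1)) := by
  induction n using Nat.strong_induction_on generalizing w with
  | h n ih =>
    rcases lt_trichotomy (n + 1) (w 0).length with hlt | heq | hgt
    · rw [concatBlocks_of_lt (by omega), concatBlocks_of_lt hlt]
      exact List.isChain_iff_getElem.1 (hchain 0) n hlt
    · have hlast : concatBlocks w hw n = (w 0).getLast (hw 0) := by
        rw [concatBlocks_of_lt (by omega), List.getLast_eq_getElem]
        simp only [← heq, Nat.add_sub_cancel]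
      have hfirst : concatBlocks w hw (n + 1) = (w 1).head (hw 1) := by
        rw [heq, ← add_zero (w 0).length, concatBlocks_length_add,
          concatBlocks_of_lt (List.length_pos_iff.2 (hw 1)), List.head_eq_getElem]
      rw [hlast, hfirst]
      exact hlink 0
    · obtain ⟨k, rfl⟩ := Nat.exists_eq_add_of_le (Nat.le_of_lt_succ hgt)
      rw [add_assoc, concatBlocks_length_add, concatBlocks_length_add]
      exact ih k (by have := List.length_pos_iff.2 (hw 0); omega) (fun i => hchain (i + 1))
        (fun i => hlink (i + 1))

theorem concatBlocks_congr {n : ℕ} (h : ∀ i ≤ n, w i = w' i) :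
    concatBlocks w hw n = concatBlocks w' hw' n := by
  induction n using Nat.strong_induction_on generalizing w w' with
  | h n ih =>
    have hpos := List.length_pos_iff.2 (hw 0)
    have h0 := h 0 (Nat.zero_le n)
    by_cases hn : n < (w 0).length
    · rw [concatBlocks_of_lt hn, concatBlocks_of_lt (h0 ▸ hn)]
      exact List.getElem_of_eq h0 hn
    · obtain ⟨k, rfl⟩ := Nat.exists_eq_add_of_le (not_lt.1 hn)
      rw [concatBlocks_length_add, h0, concatBlocks_length_add]
      exact ih k (by omega) fun i hi => h (i + 1) (by omega)

def IsMarkedBy (P : α → Prop) (l : List α) : Prop :=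
  ∀ j (hj : j < l.length), P l[j] ↔ j = 0

theorem length_le_of_concatBlocks_eq {P : α → Prop} (hP : ∀ i, IsMarkedBy P (w i))
    (hP' : ∀ i, IsMarkedBy P (w' i)) (h : concatBlocks w hw = concatBlocks w' hw') :
    (w' 0).length ≤ (w 0).length := by
  by_contra! hlt
  have hpos := List.length_pos_iff.2 (hw 0)
  have hmark : P (concatBlocks w hw (w 0).length) := by
    rw [← add_zero (w 0).length, concatBlocks_length_add,
      concatBlocks_of_lt (List.length_pos_iff.2 (hw 1))]
    exact (hP 1 0 _).2 rfl
  rw [h, concatBlocks_of_lt hlt, hP' 0] at hmark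
  omega

theorem head_eq_of_concatBlocks_eq {P : α → Prop} (hP : ∀ i, IsMarkedBy P (w i))
    (hP' : ∀ i, IsMarkedBy P (w' i)) (h : concatBlocks w hw = concatBlocks w' hw') :
    w 0 = w' 0 := by
  have hlen := (length_le_of_concatBlocks_eq hP' hP h.symm).antisymm
    (length_le_of_concatBlocks_eq hP hP' h)
  refine List.ext_getElem hlen fun j hj hj' => ?_
  rw [← concatBlocks_of_lt (hw := hw) hj, ← concatBlocks_of_lt (hw := hw') hj', h]

theorem eq_of_concatBlocks_eq {P : α → Prop} (hP : ∀ i, IsMarkedBy P (w i))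
    (hP' : ∀ i, IsMarkedBy P (w' i)) (h : concatBlocks w hw = concatBlocks w' hw') :
    w = w' := by
  funext i
  induction i generalizing w w' with
  | zero => exact head_eq_of_concatBlocks_eq hP hP' h
  | succ i ih =>
    have h0 := head_eq_of_concatBlocks_eq hP hP' h
    refine ih (hw := fun i => hw (i + 1)) (hw' := fun i => hw' (i + 1)) (fun i => hP (i + 1))
      (fun i => hP' (i + 1)) (funext fun k => ?_)
    rw [← concatBlocks_length_add, h, h0, concatBlocks_length_add]

end ConcatBlocks

section CyclePaths

variable {G : DirGraph} {v : G.V}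

theorem CycleAt.isMarkedBy (c : CycleAt G v) : IsMarkedBy (fun e => G.s e = v) c.edges := by
  have hpos := List.length_pos_iff.2 c.ne
  have hsrc : G.s c.edges[0] = v := by rw [← List.head_eq_getElem c.ne]; exact c.src
  refine fun j hj => ⟨fun h => ?_, fun hj0 => by simpa only [hj0] using hsrc⟩
  have hmap : (c.edges.map G.s)[j]'(by simpa using hj) =
      (c.edges.map G.s)[0]'(by simpa using hpos) := by
    simp only [List.getElem_map, h, hsrc]
  exact c.nodup.getElem_inj_iff.1 hmap

def pathOfCycles (γ : ℕ → CycleAt G v) : InfPath G :=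
  ⟨concatBlocks (fun i => (γ i).edges) (fun i => (γ i).ne),
    concatBlocks_rel_succ (fun i => (γ i).chain) fun i => (γ i).rng.trans (γ (i + 1)).src.symm⟩

theorem edges_eq_of_pathOfCycles_eq {γ γ' : ℕ → CycleAt G v}
    (h : pathOfCycles γ = pathOfCycles γ') (i : ℕ) : (γ i).edges = (γ' i).edges :=
  congrFun (eq_of_concatBlocks_eq (fun i => (γ i).isMarkedBy) (fun i => (γ' i).isMarkedBy)
    (congrArg Subtype.val h)) i

theorem pathOfCycles_apply_congr {γ γ' : ℕ → CycleAt G v} {n : ℕ}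
    (h : ∀ i ≤ n, γ i = γ' i) :
    (pathOfCycles γ).1 n = (pathOfCycles γ').1 n :=
  concatBlocks_congr fun i hi => congrArg CycleAt.edges (h i hi)

def binaryPath (c d : CycleAt G v) (σ : ℕ → Bool) : InfPath G :=
  pathOfCycles fun i => cond (σ i) c d

theorem binaryPath_injective {c d : CycleAt G v} (hne : c.edges ≠ d.edges) :
    Function.Injective (binaryPath c d) := by
  intro σ τ h
  funext i
  have hi := edges_eq_of_pathOfCycles_eq h i
  revert hi
  cases σ i <;> cases τ i <;> simp [hne, Ne.symm hne]

theorem binaryPath_apply_congr (c d : CycleAt G v) {σ τ : ℕ → Bool} {n : ℕ}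
    (h : ∀ i ≤ n, σ i = τ i) : (binaryPath c d σ).1 n = (binaryPath c d τ).1 n :=
  pathOfCycles_apply_congr fun i hi => by rw [h i hi]

end CyclePaths

theorem tailEq_equivalence (G : DirGraph) : Equivalence (TailEq G) where
  refl _ := ⟨0, 0, fun _ => rfl⟩
  symm := fun ⟨m, n, h⟩ => ⟨n, m, fun k => (h k).symm⟩
  trans := fun ⟨m, n, h⟩ ⟨m', n', h'⟩ =>
    ⟨m' + m, n + n', fun k => by
      rw [add_assoc, h, add_left_comm, h', add_assoc]⟩

theorem countable_setOf_tailEq {G : DirGraph} {β : Type*} [Countable β]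
    {f : (ℕ → β) → InfPath G} (hf : Function.Injective f)
    (hprefix : ∀ σ τ n, (∀ i ≤ n, σ i = τ i) → (f σ).1 n = (f τ).1 n)
    (q : InfPath G) :
    {σ | TailEq G (f σ) q}.Countable := by
  rw [← Set.countable_coe_iff]
  choose m n hmn using fun σ : {σ | TailEq G (f σ) q} => σ.2
  -- `f σ` agrees with a shift of `q` from `n σ` on, and before that it is fixed by `σ` below `n σ`.
  refine Function.Injective.countable
    (f := fun σ => (m σ, n σ, (List.range (n σ)).map σ.1)) fun σ τ h => ?_
  simp only [Prod.mk.injEq] at h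
  obtain ⟨hm, hn, hpre⟩ := h
  rw [hn, List.map_inj_left] at hpre
  refine Subtype.ext (hf (Subtype.ext (funext fun k => ?_)))
  rcases lt_or_ge k (n σ) with hk | hk
  · exact hprefix _ _ k fun i hi => hpre i (List.mem_range.2 (hn ▸ by omega))
  · obtain ⟨j, rfl⟩ := Nat.exists_eq_add_of_le hk
    rw [hmn σ j, hm, hn, hmn τ j]

instance : Uncountable (ℕ → Bool) := by
  refine uncountable_iff_forall_not_surjective.2 fun f hf => ?_
  obtain ⟨n, hn⟩ := hf fun n => !f n n
  simpa using congrFun hn n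

/-- If two distinct cycles share a common base vertex, then the
graph has uncountably many tail-equivalence classes of infinite paths. -/
theorem stmt4 (G : DirGraph) (v : G.V) (c d : CycleAt G v)
    (hne : c.edges ≠ d.edges) :
    ¬Countable (Quot (TailEq G)) := by
  intro hcount
  have hfiber (x : Quot (TailEq G)) :
      {σ : ℕ → Bool | Quot.mk _ (binaryPath c d σ) = x}.Countable := by
    obtain ⟨q, rfl⟩ := Quot.exists_rep x
    refine (countable_setOf_tailEq (binaryPath_injective hne)
      (fun _ _ _ => binaryPath_apply_congr c d) q).mono fun σ hσ => ?_
    exact (tailEq_equivalence G).eqvGen_iff.1 (Quot.eq.1 hσ)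
  have huniv : (Set.univ : Set (ℕ → Bool)).Countable :=
    (Set.countable_iUnion hfiber).mono fun σ _ =>
      Set.mem_iUnion_of_mem (Quot.mk _ (binaryPath c d σ)) rfl
  exact not_countable (Set.countable_univ_iff.1 huniv)
end

section
/- Every simple left module over a unital von Neumann regular ring R is isomorphic either to a simple left module over the quotient R/A or to a simple left A-module, where A is any fixed nonzero proper two-sided ideal of R. -/
/-!
For every `s`, the set `A • s` is the image of the left ideal `A` under `r ↦ r • s`, a submodule,
so it is `0` or all of `S`. If `a • s₀ ≠ 0` for some `a ∈ A`, then for any `s ≠ 0` we can write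
`s₀ = r • s`, and `a * r ∈ A` because `A` is also a right ideal; so `A • s ≠ 0`, hence `A • s = S`.
-/

namespace IsSimpleModule

variable {R M : Type*} [Ring R] [AddCommGroup M] [Module R M] [IsSimpleModule R M]

theorem exists_mem_smul_eq {I : Ideal R} {s : M} {a : R} (ha : a ∈ I) (has : a • s ≠ 0)
    (t : M) : ∃ b ∈ I, b • s = t := by
  have hne : Submodule.map (LinearMap.toSpanSingleton R M s) I ≠ ⊥ :=
    (Submodule.ne_bot_iff _).mpr ⟨a • s, Submodule.mem_map_of_mem ha, has⟩
  have ht : t ∈ Submodule.map (LinearMap.toSpanSingleton R M s) I :=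
    ((eq_bot_or_eq_top _).resolve_left hne).symm ▸ Submodule.mem_top
  simpa using ht

theorem exists_mem_smul_ne_zero (A : TwoSidedIdeal R) {a : R} (ha : a ∈ A) {s₀ : M}
    (has₀ : a • s₀ ≠ 0) {s : M} (hs : s ≠ 0) : ∃ b ∈ A, b • s ≠ 0 := by
  obtain ⟨r, rfl⟩ := toSpanSingleton_surjective R hs s₀
  exact ⟨a * r, A.mul_mem_right a r ha, by simpa [mul_smul] using has₀⟩

end IsSimpleModule

theorem stmt9_general {R : Type*} [Ring R]
    (A : TwoSidedIdeal R)
    (S : Type*) [AddCommGroup S] [Module R S] (hS : IsSimpleModule R S) :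
    (∀ a ∈ A, ∀ s : S, a • s = 0) ∨
      (∀ s : S, s ≠ 0 → ∀ t : S, ∃ a ∈ A, a • s = t) := by
  refine or_iff_not_imp_left.mpr fun hA s hs t => ?_
  push Not at hA
  obtain ⟨a, ha, s₀, has₀⟩ := hA
  obtain ⟨b, hb, hbs⟩ := hS.exists_mem_smul_ne_zero A ha has₀ hs
  simpa only [TwoSidedIdeal.mem_asIdeal] using
    hS.exists_mem_smul_eq (I := A.asIdeal) (TwoSidedIdeal.mem_asIdeal.mpr hb) hbs t

/-- Let `R` be a unital von Neumann regular ring and `A` a nonzero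
proper two-sided ideal. Then every simple left `R`-module `S` is either
annihilated by `A` (hence is a simple left module over `R/A`), or is simple as
a left `A`-module (every nonzero element generates everything under the `A`-action). -/
theorem stmt9 {R : Type*} [Ring R] (hreg : ∀ a : R, ∃ x : R, a = a * x * a)
    (A : TwoSidedIdeal R) (hA0 : A ≠ ⊥) (hA1 : A ≠ ⊤)
    (S : Type*) [AddCommGroup S] [Module R S] (hS : IsSimpleModule R S) :
    (∀ a ∈ A, ∀ s : S, a • s = 0) ∨
      (∀ s : S, s ≠ 0 → ∀ t : S, ∃ a ∈ A, a • s = t) :=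
  stmt9_general A S hS
end

section
/- The lattice of two-sided ideals of a von Neumann regular ring is distributive. -/
/-- The lattice of two-sided ideals of a von Neumann regular
ring is distributive. -/
theorem stmt14 {R : Type*} [Ring R] (hreg : ∀ a : R, ∃ x : R, a = a * x * a)
    (A B C : TwoSidedIdeal R) : A ⊓ (B ⊔ C) = (A ⊓ B) ⊔ (A ⊓ C) := by
  refine le_antisymm ?_ (sup_le (inf_le_inf_left _ le_sup_left) (inf_le_inf_left _ le_sup_right))
  intro a ha
  rw [TwoSidedIdeal.mem_inf] at ha
  obtain ⟨hA, hBC⟩ := ha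
  obtain ⟨b, hb, c, hc, rfl⟩ := TwoSidedIdeal.mem_sup.mp hBC
  obtain ⟨x, hx⟩ := hreg (b + c)
  have heq : b + c = (b + c) * x * b + (b + c) * x * c := by
    nth_rewrite 1 [hx]; rw [mul_add]
  rw [heq]
  refine TwoSidedIdeal.mem_sup.mpr ⟨_, (TwoSidedIdeal.mem_inf _).mpr ⟨?_, ?_⟩, _,
    (TwoSidedIdeal.mem_inf _).mpr ⟨?_, ?_⟩, rfl⟩
  · exact A.mul_mem_right _ _ (A.mul_mem_right _ _ hA)
  · exact B.mul_mem_left _ _ hb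
  · exact A.mul_mem_right _ _ (A.mul_mem_right _ _ hA)
  · exact C.mul_mem_left _ _ hc
end
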